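/- With block-separable data A = diag(A₁, A₂), B₁ = [B̃₁; 0], B₂ = [0; B̃₂], and P⁺ = diag(P₁⁺, -P₂⁺) with P₁⁺, P₂⁺ symmetric positive semidefinite, the Riccati update P = A'P⁺A - A'P⁺B H⁻¹ B'P⁺A (with H = diag(τR̄ + B̃₁'P₁⁺B̃₁, -τS̄ - B̃₂'P₂⁺B̃₂), R̄, S̄ ≻ 0, τ > 0) preserves the signed block-diagonal form: P = diag(P₁, -P₂) with P₁, P₂ symmetric positive semidefinite. -/

import Mathlib

open Matrix

private lemma smul_posDef {m : ℕ} {R : Matrix (Fin m) (Fin m) ℝ} (hR : R.PosDef)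
    {τ : ℝ} (hτ : 0 < τ) : (τ • R).PosDef := by
  refine PosDef.of_dotProduct_mulVec_pos ?_ (fun x hx => ?_)
  · unfold Matrix.IsHermitian
    rw [conjTranspose_smul, hR.1]
    simp
  · rw [smul_mulVec, dotProduct_smul, smul_eq_mul]
    exact mul_pos hτ (hR.dotProduct_mulVec_pos hx)

private lemma fromBlocks_R_zero_psd {m n : ℕ} {R : Matrix (Fin m) (Fin m) ℝ}
    (hR : R.PosSemidef) :
    (fromBlocks R 0 0 (0 : Matrix (Fin n) (Fin n) ℝ)).PosSemidef := by
  refine PosSemidef.of_dotProduct_mulVec_nonneg ?_ (fun x => ?_)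
  · unfold Matrix.IsHermitian
    rw [fromBlocks_conjTranspose, hR.1]
    simp
  · have := hR.dotProduct_mulVec_nonneg (x ∘ Sum.inl)
    simpa [fromBlocks_mulVec, dotProduct, Fintype.sum_sum_type, mulVec] using this

private lemma schur_core {n m : ℕ} (A : Matrix (Fin n) (Fin n) ℝ)
    (Bt : Matrix (Fin n) (Fin m) ℝ) {Pp : Matrix (Fin n) (Fin n) ℝ}
    (hPp : Pp.PosSemidef) {R : Matrix (Fin m) (Fin m) ℝ} (hR : R.PosDef) :
    (Aᵀ * Pp * A - Aᵀ * Pp * Bt * (R + Btᵀ * Pp * Bt)⁻¹ * Btᵀ * Pp * A).PosSemidef := by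
  have hBPB : (Btᵀ * Pp * Bt).PosSemidef := by
    simpa using hPp.conjTranspose_mul_mul_same Bt
  have hH1 : (R + Btᵀ * Pp * Bt).PosDef := hR.add_posSemidef hBPB
  haveI : Invertible (R + Btᵀ * Pp * Bt) := hH1.isUnit.invertible
  have hM : ((fromCols Bt A)ᴴ * Pp * fromCols Bt A
      + fromBlocks R 0 0 0).PosSemidef :=
    (hPp.conjTranspose_mul_mul_same (fromCols Bt A)).add (fromBlocks_R_zero_psd hR.posSemidef)
  have hEq : (fromCols Bt A)ᴴ * Pp * fromCols Bt A + fromBlocks R 0 0 0 =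
      fromBlocks (R + Btᵀ * Pp * Bt) (Btᵀ * Pp * A) ((Btᵀ * Pp * A)ᴴ) (Aᵀ * Pp * A) := by
    rw [conjTranspose_fromCols_eq_fromRows_conjTranspose, fromRows_mul, fromRows_mul_fromCols,
      fromBlocks_add]
    have hPpH : Ppᴴ = Pp := hPp.1
    simp only [conjTranspose_mul, conjTranspose_conjTranspose, hPpH]
    congr 1 <;> simp [Matrix.mul_assoc]
    · exact (add_comm _ _)
  rw [hEq] at hM
  have := (PosDef.fromBlocks₁₁ (Btᵀ * Pp * A) (Aᵀ * Pp * A) hH1).mp hM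
  have h2 : (Btᵀ * Pp * A)ᴴ = Aᵀ * Pp * Bt := by
    simp only [conjTranspose_mul, conjTranspose_conjTranspose]
    rw [hPp.1]
    simp [Matrix.mul_assoc]
  rw [h2] at this
  simpa only [Matrix.mul_assoc] using this

/-- In the player-separable case, the Riccati update preserves the signed
block-diagonal structure `P = diag(P₁, -P₂)` with `P₁, P₂ ⪰ 0`. -/
theorem separable_riccati_preserves_signed_blocks {n1 n2 m1 m2 : ℕ}
    (A1 : Matrix (Fin n1) (Fin n1) ℝ) (A2 : Matrix (Fin n2) (Fin n2) ℝ)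
    (Bt1 : Matrix (Fin n1) (Fin m1) ℝ) (Bt2 : Matrix (Fin n2) (Fin m2) ℝ)
    (P1p : Matrix (Fin n1) (Fin n1) ℝ) (P2p : Matrix (Fin n2) (Fin n2) ℝ)
    (hP1p : P1p.PosSemidef) (hP2p : P2p.PosSemidef)
    (Rbar : Matrix (Fin m1) (Fin m1) ℝ) (hR : Rbar.PosDef)
    (Sbar : Matrix (Fin m2) (Fin m2) ℝ) (hS : Sbar.PosDef)
    (τ : ℝ) (hτ : 0 < τ)
    (A : Matrix (Fin n1 ⊕ Fin n2) (Fin n1 ⊕ Fin n2) ℝ)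
    (hA : A = Matrix.fromBlocks A1 0 0 A2)
    (B : Matrix (Fin n1 ⊕ Fin n2) (Fin m1 ⊕ Fin m2) ℝ)
    (hB : B = Matrix.fromBlocks Bt1 0 0 Bt2)
    (Pp : Matrix (Fin n1 ⊕ Fin n2) (Fin n1 ⊕ Fin n2) ℝ)
    (hPp : Pp = Matrix.fromBlocks P1p 0 0 (-P2p))
    (H : Matrix (Fin m1 ⊕ Fin m2) (Fin m1 ⊕ Fin m2) ℝ)
    (hH : H = Matrix.fromBlocks (τ • Rbar + Bt1ᵀ * P1p * Bt1) 0 0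
      (-(τ • Sbar) - Bt2ᵀ * P2p * Bt2))
    (P : Matrix (Fin n1 ⊕ Fin n2) (Fin n1 ⊕ Fin n2) ℝ)
    (hP : P = Aᵀ * Pp * A - Aᵀ * Pp * B * H⁻¹ * Bᵀ * Pp * A) :
    ∃ (Q1 : Matrix (Fin n1) (Fin n1) ℝ) (Q2 : Matrix (Fin n2) (Fin n2) ℝ),
      Q1.PosSemidef ∧ Q2.PosSemidef ∧ P = Matrix.fromBlocks Q1 0 0 (-Q2) := by
  -- positive definiteness of the control-block matrices
  have hBPB1 : (Bt1ᵀ * P1p * Bt1).PosSemidef := by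
    simpa using hP1p.conjTranspose_mul_mul_same Bt1
  have hBPB2 : (Bt2ᵀ * P2p * Bt2).PosSemidef := by
    simpa using hP2p.conjTranspose_mul_mul_same Bt2
  set H1 : Matrix (Fin m1) (Fin m1) ℝ := τ • Rbar + Bt1ᵀ * P1p * Bt1 with hH1def
  set H2 : Matrix (Fin m2) (Fin m2) ℝ := τ • Sbar + Bt2ᵀ * P2p * Bt2 with hH2def
  have hH1 : H1.PosDef := (smul_posDef hR hτ).add_posSemidef hBPB1
  have hH2 : H2.PosDef := (smul_posDef hS hτ).add_posSemidef hBPB2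
  have hHblock : H = Matrix.fromBlocks H1 0 0 (-H2) := by
    rw [hH]; congr 1; rw [hH2def]; abel
  -- compute the inverse of H
  have hHinv : H⁻¹ = Matrix.fromBlocks H1⁻¹ 0 0 (-(H2⁻¹)) := by
    apply Matrix.inv_eq_right_inv
    rw [hHblock, fromBlocks_multiply]
    simp only [Matrix.mul_zero, Matrix.zero_mul, add_zero, zero_add,
      Matrix.mul_neg, Matrix.neg_mul, neg_neg]
    rw [Matrix.mul_nonsing_inv _ (isUnit_iff_isUnit_det _ |>.mp hH1.isUnit),
      Matrix.mul_nonsing_inv _ (isUnit_iff_isUnit_det _ |>.mp hH2.isUnit),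
      neg_zero, fromBlocks_one]
  refine ⟨A1ᵀ * P1p * A1 - A1ᵀ * P1p * Bt1 * H1⁻¹ * Bt1ᵀ * P1p * A1,
    A2ᵀ * P2p * A2 - A2ᵀ * P2p * Bt2 * H2⁻¹ * Bt2ᵀ * P2p * A2,
    schur_core A1 Bt1 hP1p (smul_posDef hR hτ),
    schur_core A2 Bt2 hP2p (smul_posDef hS hτ), ?_⟩
  rw [hP, hA, hB, hPp, hHinv]
  rw [fromBlocks_transpose, fromBlocks_transpose]
  simp only [fromBlocks_multiply, Matrix.mul_zero, Matrix.zero_mul, add_zero, zero_add,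
    transpose_zero, transpose_neg, Matrix.mul_neg, Matrix.neg_mul, neg_neg, neg_zero]
  ext (i | i) (j | j) <;>
    simp [Matrix.sub_apply, Matrix.neg_apply] <;> ring
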